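/- arXiv:1408.2599 — 4 statements merged into one kernel-verified Lean document; each statement's English description precedes it below -/
import Mathlib

section
/- Let Λ be a Noetherian ring with no zero divisors, and let x be a nonzero element of Λ satisfying xΛ = Λx, such that the quotient ring Ω := Λ/xΛ also has no zero divisors. Write I = xΛ (= Λx). Let M be a finitely generated left Λ-module such that M[x] = 0 and such that ⋂_{i≥1} I^i = 0 (equivalently, ⋂_{i≥1} x^iΛ = 0). If the Ω-module M/xM is faithful, then M is a faithful Λ-module. -/
/-!
STATEMENT 0: Let Λ be a Noetherian ring with no zero divisors, and let `x` be a nonzero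
element of Λ satisfying `xΛ = Λx`, such that the quotient ring `Ω := Λ/xΛ` also has no
zero divisors. Let `M` be a finitely generated left Λ-module with `M[x] = 0` and
`⋂_{i≥1} x^iΛ = 0`. If the Ω-module `M/xM` is faithful, then `M` is a faithful Λ-module.

Faithfulness of the Ω-module `M/xM` is rendered elementwise: any `a : Λ` whose image in Ω
annihilates `M/xM` (i.e. `a • m ∈ xM` for all `m`) has zero image in `Ω = Λ/xΛ`
(i.e. `a ∈ xΛ`).  "Ω has no zero divisors" is rendered as: `xΛ` is a completely prime
two-sided ideal.
-/
theorem faithful_of_quotient_faithful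
    {Λ : Type*} [Ring Λ] [IsNoetherianRing Λ] [NoZeroDivisors Λ]
    {M : Type*} [AddCommGroup M] [Module Λ M] [Module.Finite Λ M]
    (x : Λ) (hx : x ≠ 0)
    -- xΛ = Λx
    (hnormal : {y : Λ | ∃ a, y = x * a} = {y : Λ | ∃ a, y = a * x})
    -- Ω = Λ/xΛ has no zero divisors
    (hΩ : ∀ a b : Λ, (∃ c, a * b = x * c) → (∃ c, a = x * c) ∨ (∃ c, b = x * c))
    -- M[x] = 0
    (hMx : ∀ m : M, x • m = 0 → m = 0)
    -- ⋂_{i ≥ 1} x^i Λ = 0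
    (hint : ∀ a : Λ, (∀ i : ℕ, 1 ≤ i → ∃ b, a = x ^ i * b) → a = 0)
    -- M/xM is a faithful Ω-module
    (hfaith : ∀ a : Λ, (∀ m : M, ∃ m' : M, a • m = x • m') → ∃ b, a = x * b) :
    -- M is a faithful Λ-module
    ∀ a : Λ, (∀ m : M, a • m = 0) → a = 0 := by
  intro a ha
  have key : ∀ i : ℕ, ∃ b : Λ, a = x ^ i * b ∧ ∀ m : M, b • m = 0 := by
    intro i
    induction i with
    | zero => exact ⟨a, by simp, ha⟩
    | succ n ih =>
      obtain ⟨b, hb, hbann⟩ := ih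
      obtain ⟨c, hc⟩ := hfaith b (fun m => ⟨0, by simp [hbann m]⟩)
      refine ⟨c, by rw [hb, hc, pow_succ, mul_assoc], fun m => ?_⟩
      have : x • (c • m) = 0 := by rw [← mul_smul, ← hc, hbann]
      exact hMx _ this
  exact hint a (fun i _ => ⟨(key i).choose, (key i).choose_spec.1⟩)
end

section
/- Let Λ be a ring with no zero divisors and let λ be a nonzero central element of Λ. Suppose 0 → B' → M' → M → B → 0 is an exact sequence of left Λ-modules in which both B' and B are annihilated by λ. Then M' is a faithful Λ-module if and only if M is a faithful Λ-module. -/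
/-!
STATEMENT 1: Let Λ be a ring with no zero divisors and let `l` be a nonzero central
element of Λ.  Suppose `0 → B' → M' → M → B → 0` is an exact sequence of left Λ-modules
in which both `B'` and `B` are annihilated by `l`.  Then `M'` is a faithful Λ-module if
and only if `M` is a faithful Λ-module.
-/
theorem faithful_iff_of_four_term_exact
    {Λ : Type*} [Ring Λ] [NoZeroDivisors Λ]
    {B' M' M B : Type*}
    [AddCommGroup B'] [Module Λ B'] [AddCommGroup M'] [Module Λ M']
    [AddCommGroup M] [Module Λ M] [AddCommGroup B] [Module Λ B]
    (l : Λ) (hl : l ≠ 0) (hcentral : ∀ a : Λ, l * a = a * l)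
    (f : B' →ₗ[Λ] M') (g : M' →ₗ[Λ] M) (h : M →ₗ[Λ] B)
    -- exactness of 0 → B' → M' → M → B → 0
    (hf : Function.Injective f)
    (hfg : LinearMap.range f = LinearMap.ker g)
    (hgh : LinearMap.range g = LinearMap.ker h)
    (hh : Function.Surjective h)
    -- B' and B are annihilated by l
    (hB' : ∀ b : B', l • b = 0) (hB : ∀ b : B, l • b = 0) :
    (∀ a : Λ, (∀ m : M', a • m = 0) → a = 0) ↔
      (∀ a : Λ, (∀ m : M, a • m = 0) → a = 0) := by
  constructor
  · intro hM' a ha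
    have key : ∀ m' : M', (l * a) • m' = 0 := by
      intro m'
      have hker : a • m' ∈ LinearMap.ker g := by
        rw [LinearMap.mem_ker, LinearMap.map_smul, ha]
      rw [← hfg] at hker
      obtain ⟨b', hb'⟩ := hker
      rw [mul_smul, ← hb', ← LinearMap.map_smul, hB', map_zero]
    have : l * a = 0 := hM' _ key
    rcases mul_eq_zero.mp this with h1 | h1
    · exact absurd h1 hl
    · exact h1
  · intro hM a ha
    have key : ∀ m : M, (a * l) • m = 0 := by
      intro m
      have hker : l • m ∈ LinearMap.ker h := by
        rw [LinearMap.mem_ker, LinearMap.map_smul, hB]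
      rw [← hgh] at hker
      obtain ⟨m', hm'⟩ := hker
      rw [mul_smul, ← hm', ← LinearMap.map_smul, ha, map_zero]
    have : a * l = 0 := hM _ key
    rcases mul_eq_zero.mp this with h1 | h1
    · exact h1
    · exact absurd h1 hl
end

section
/- Let Λ be a ring with no zero divisors, and suppose M' → M → M'' → 0 is an exact sequence of left Λ-modules (i.e., there are Λ-linear maps f : M' → M and g : M → M'' with g surjective and ker g = im f), where M' is nonzero and M'' is finite as a set. If M is a faithful Λ-module, then M' is a faithful Λ-module. -/
/-!
STATEMENT 2: Let Λ be a ring with no zero divisors, and suppose `M' → M → M'' → 0` is an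
exact sequence of left Λ-modules, where `M'` is nonzero and `M''` is finite as a set.
If `M` is a faithful Λ-module, then `M'` is a faithful Λ-module.
-/
theorem faithful_of_faithful_of_exact
    {Λ : Type*} [Ring Λ] [NoZeroDivisors Λ]
    {M' M M'' : Type*}
    [AddCommGroup M'] [Module Λ M'] [AddCommGroup M] [Module Λ M]
    [AddCommGroup M''] [Module Λ M'']
    (f : M' →ₗ[Λ] M) (g : M →ₗ[Λ] M'')
    -- exactness of M' → M → M'' → 0
    (hg : Function.Surjective g) (hexact : LinearMap.ker g = LinearMap.range f)
    -- M' is nonzero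
    (hM' : ∃ m : M', m ≠ 0)
    -- M'' is finite as a set
    [Finite M'']
    -- M is a faithful Λ-module
    (hM : ∀ a : Λ, (∀ m : M, a • m = 0) → a = 0) :
    -- then M' is a faithful Λ-module
    ∀ a : Λ, (∀ m : M', a • m = 0) → a = 0 := by
  intro a ha
  by_contra hne
  -- `a` kills the kernel of `g`
  have hkill : ∀ m : M, g m = 0 → a • m = 0 := by
    intro m hm
    have hm' : m ∈ LinearMap.range f := by
      rw [← hexact]; exact hm
    obtain ⟨m', rfl⟩ := hm'
    rw [← map_smul, ha m', map_zero]
  by_cases hfin : Finite Λ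
  · -- finite case: `a` has a left inverse
    have hinj : Function.Injective (fun x : Λ => x * a) := by
      intro x y h
      have hsub : (x - y) * a = 0 := by
        simp only at h
        rw [sub_mul, h, sub_self]
      rcases mul_eq_zero.mp hsub with h0 | h0
      · exact sub_eq_zero.mp h0
      · exact absurd h0 hne
    have hsurj : Function.Surjective (fun x : Λ => x * a) :=
      Finite.surjective_of_injective hinj
    obtain ⟨c, hc⟩ := hsurj 1
    simp only at hc
    obtain ⟨m₀, hm₀⟩ := hM'
    apply hm₀
    calc m₀ = (c * a) • m₀ := by rw [hc, one_smul]
      _ = c • (a • m₀) := by rw [mul_smul]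
      _ = 0 := by rw [ha m₀, smul_zero]
  · -- infinite case: some nonzero `λ` kills the finite module `M''`
    have : Infinite Λ := not_finite_iff_infinite.mp hfin
    obtain ⟨x, y, hxy, hmap⟩ :=
      Finite.exists_ne_map_eq_of_infinite (fun l : Λ => fun z : M'' => l • z)
    set lam : Λ := x - y with hlam
    have hlam0 : lam ≠ 0 := sub_ne_zero.mpr hxy
    have hkillM'' : ∀ z : M'', lam • z = 0 := by
      intro z
      have := congrFun hmap z
      rw [hlam, sub_smul, this, sub_self]
    have hall : ∀ m : M, (a * lam) • m = 0 := by
      intro m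
      rw [mul_smul]
      apply hkill
      rw [map_smul, hkillM'' (g m)]
    have := hM (a * lam) hall
    exact (mul_ne_zero hne hlam0) this
end

section
/- Let Λ be a Noetherian ring with no zero divisors, and let x be a nonzero element of Λ satisfying xΛ = Λx, such that Ω := Λ/xΛ has no zero divisors and ⋂_{i≥1} x^iΛ = 0. Let M be a finitely generated left Λ-module, set M' := ⋃_{i≥1} M[x^i] and M'' := M/M'. If the Ω-module M''/xM'' is faithful, then M is a faithful Λ-module. -/
/-!
STATEMENT 7: Let Λ be a Noetherian ring with no zero divisors, and let `x ≠ 0` satisfy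
`xΛ = Λx`, with `Ω := Λ/xΛ` having no zero divisors and `⋂_{i≥1} x^iΛ = 0`.  Let `M` be
a finitely generated left Λ-module, set `M' := ⋃_{i≥1} M[x^i]` and `M'' := M/M'`.
If the Ω-module `M''/xM''` is faithful, then `M` is a faithful Λ-module.

Faithfulness of the Ω-module `M''/xM''` is rendered elementwise: any `a : Λ` that kills
`M''/xM''` (i.e. for every `m : M`, the class of `a • m` in `M'' = M/M'` lies in `xM''`,
i.e. `a • m = x • m' + t` with `t ∈ M' = ⋃_{i≥1} M[x^i]`) lies in `xΛ`, i.e. has zero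
image in `Ω`.
-/
theorem faithful_of_torsionfree_quotient_faithful
    {Λ : Type*} [Ring Λ] [IsNoetherianRing Λ] [NoZeroDivisors Λ]
    {M : Type*} [AddCommGroup M] [Module Λ M] [Module.Finite Λ M]
    (x : Λ) (hx : x ≠ 0)
    -- xΛ = Λx
    (hnormal : {y : Λ | ∃ a, y = x * a} = {y : Λ | ∃ a, y = a * x})
    -- Ω = Λ/xΛ has no zero divisors
    (hΩ : ∀ a b : Λ, (∃ c, a * b = x * c) → (∃ c, a = x * c) ∨ (∃ c, b = x * c))
    -- ⋂_{i ≥ 1} x^i Λ = 0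
    (hint : ∀ a : Λ, (∀ i : ℕ, 1 ≤ i → ∃ b, a = x ^ i * b) → a = 0)
    -- M''/xM'' is a faithful Ω-module, where M'' = M/M' and M' = ⋃_{i≥1} M[x^i]
    (hfaith : ∀ a : Λ,
      (∀ m : M, ∃ m' t : M, (∃ i : ℕ, 1 ≤ i ∧ x ^ i • t = 0) ∧ a • m = x • m' + t) →
      ∃ b, a = x * b) :
    -- M is a faithful Λ-module
    ∀ a : Λ, (∀ m : M, a • m = 0) → a = 0 := by
  intro a ha
  apply hint
  have key : ∀ i : ℕ, ∃ b, a = x ^ i * b := by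
    intro i
    induction i with
    | zero => exact ⟨a, by simp⟩
    | succ n ih =>
      obtain ⟨b, hb⟩ := ih
      have hbm : ∀ m : M, x ^ n • (b • m) = 0 := by
        intro m
        rw [← mul_smul, ← hb]
        exact ha m
      obtain ⟨c, hc⟩ := hfaith b (fun m => ⟨0, b • m,
        ⟨n + 1, Nat.le_add_left 1 n, by rw [pow_succ', mul_smul, hbm m, smul_zero]⟩,
        by rw [smul_zero, zero_add]⟩)
      exact ⟨c, by rw [hb, hc, pow_succ, mul_assoc]⟩
  intro i _
  exact key i
end
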